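/- For an n×n lower shift matrix L and any square matrix M, the identity Σ_{j=0}^{n-1} L^j ⊗ T̃_j(M) = (1/2)(I⊗I - L²⊗I)·(I⊗I + L²⊗I - 2L⊗M)⁻¹ holds, where T̃_j are the rescaled Chebyshev polynomials of the first kind (T̃_0 = 1/2, T̃_j = T_j for j ≥ 1). -/
import Mathlib


open Kronecker

/-- The rescaled Chebyshev polynomials of the first kind (over ℂ):
`T̃_0 = 1/2`, `T̃_j = T_j` for `j ≥ 1`. -/
noncomputable def rescaledChebyshevT (j : ℕ) : Polynomial ℂ :=
  if j = 0 then Polynomial.C (1 / 2) else Polynomial.Chebyshev.T ℂ (j : ℤ)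



lemma shift_pow_eq_zero {n : ℕ} (L : Matrix (Fin n) (Fin n) ℂ)
    (hL : ∀ a b : Fin n, L a b = if (a : ℕ) = (b : ℕ) + 1 then 1 else 0) :
    ∀ (k : ℕ) (a b : Fin n), (a : ℕ) < (b : ℕ) + k → (L ^ k) a b = 0 := by
  intro k
  induction k with
  | zero =>
    intro a b hab
    simp only [pow_zero, Matrix.one_apply]
    rw [if_neg]
    intro h; subst h; omega
  | succ k ih =>
    intro a b hab
    rw [pow_succ, Matrix.mul_apply]
    apply Finset.sum_eq_zero
    intro c _
    by_cases hc : (c : ℕ) = (b : ℕ) + 1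
    · rw [ih a c (by omega)]; ring
    · rw [hL c b, if_neg hc]; ring

lemma shift_pow_zero_of_le {n : ℕ} (L : Matrix (Fin n) (Fin n) ℂ)
    (hL : ∀ a b : Fin n, L a b = if (a : ℕ) = (b : ℕ) + 1 then 1 else 0)
    {k : ℕ} (hk : n ≤ k) : L ^ k = 0 := by
  ext a b
  rw [shift_pow_eq_zero L hL k a b (by omega)]
  rfl


lemma kron_pow {n d : ℕ} (A : Matrix (Fin n) (Fin n) ℂ) (B : Matrix (Fin d) (Fin d) ℂ) (k : ℕ) :
    (A ⊗ₖ B) ^ k = (A ^ k) ⊗ₖ (B ^ k) := by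
  induction k with
  | zero => simp [Matrix.one_kronecker_one]
  | succ k ih => rw [pow_succ, ih, ← Matrix.mul_kronecker_mul, ← pow_succ, ← pow_succ]

lemma A_isUnit {n d : ℕ} (L : Matrix (Fin n) (Fin n) ℂ)
    (hLn : L ^ n = 0) (M : Matrix (Fin d) (Fin d) ℂ) :
    IsUnit ((1 : Matrix (Fin n × Fin d) (Fin n × Fin d) ℂ)
        + (L ^ 2) ⊗ₖ (1 : Matrix (Fin d) (Fin d) ℂ) - (2 : ℂ) • (L ⊗ₖ M)) := by
  have h1 : IsNilpotent ((L ^ 2) ⊗ₖ (1 : Matrix (Fin d) (Fin d) ℂ)) := by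
    refine ⟨n, ?_⟩
    rw [kron_pow]
    rw [← pow_mul, one_pow, show 2 * n = n + n by ring, pow_add, hLn, Matrix.zero_mul,
      Matrix.zero_kronecker]
  have h2 : IsNilpotent ((2 : ℂ) • (L ⊗ₖ M)) := by
    refine ⟨n, ?_⟩
    rw [smul_pow, kron_pow, hLn, Matrix.zero_kronecker, smul_zero]
  have hcomm : Commute ((L ^ 2) ⊗ₖ (1 : Matrix (Fin d) (Fin d) ℂ)) ((2 : ℂ) • (L ⊗ₖ M)) := by
    unfold Commute SemiconjBy
    rw [Matrix.mul_smul, Matrix.smul_mul, ← Matrix.mul_kronecker_mul, ← Matrix.mul_kronecker_mul,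
      Matrix.one_mul, Matrix.mul_one, show L ^ 2 * L = L * L ^ 2 from ((Commute.refl L).pow_left 2).eq]
  have h3 : IsNilpotent ((L ^ 2) ⊗ₖ (1 : Matrix (Fin d) (Fin d) ℂ) - (2 : ℂ) • (L ⊗ₖ M)) :=
    Commute.isNilpotent_sub hcomm h1 h2
  have h4 := h3.isUnit_one_add
  rwa [← add_sub_assoc] at h4

lemma kronecker_sub' {n d : ℕ} (A : Matrix (Fin n) (Fin n) ℂ) (B C : Matrix (Fin d) (Fin d) ℂ) :
    A ⊗ₖ (B - C) = A ⊗ₖ B - A ⊗ₖ C := by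
  ext ⟨i, j⟩ ⟨k, l⟩
  simp [Matrix.kroneckerMap_apply, mul_sub]

lemma aeval_commute {d : ℕ} (M : Matrix (Fin d) (Fin d) ℂ) (p : Polynomial ℂ) :
    Polynomial.aeval M p * M = M * Polynomial.aeval M p :=
  calc Polynomial.aeval M p * M = Polynomial.aeval M p * Polynomial.aeval M Polynomial.X := by
        rw [Polynomial.aeval_X]
    _ = Polynomial.aeval M (p * Polynomial.X) := (map_mul _ _ _).symm
    _ = Polynomial.aeval M (Polynomial.X * p) := by rw [mul_comm]
    _ = M * Polynomial.aeval M p := by rw [map_mul, Polynomial.aeval_X]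

lemma two_smul_eq {n d : ℕ} (M : Matrix (Fin d) (Fin d) ℂ) (p : Polynomial ℂ)
    (A : Matrix (Fin n) (Fin n) ℂ) :
    (2 : ℂ) • (A ⊗ₖ (Polynomial.aeval M p * M)) = A ⊗ₖ (2 * M * Polynomial.aeval M p) := by
  rw [← Matrix.kronecker_smul, aeval_commute]
  congr 1
  rw [two_smul, two_mul, add_mul]

lemma u_rec {d : ℕ} (M : Matrix (Fin d) (Fin d) ℂ) (m : ℤ) :
    Polynomial.aeval M (Polynomial.Chebyshev.T ℂ (m + 2)) =
      2 * M * Polynomial.aeval M (Polynomial.Chebyshev.T ℂ (m + 1))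
        - Polynomial.aeval M (Polynomial.Chebyshev.T ℂ m) := by
  rw [Polynomial.Chebyshev.T_add_two, map_sub, map_mul, map_mul, Polynomial.aeval_X,
    map_ofNat]

lemma kron_twoMul {n d : ℕ} (L : Matrix (Fin n) (Fin n) ℂ) (M : Matrix (Fin d) (Fin d) ℂ)
    (A : Matrix (Fin n) (Fin n) ℂ) (B : Matrix (Fin d) (Fin d) ℂ) :
    A ⊗ₖ (2 * M * B) = (2 : ℂ) • (A ⊗ₖ (M * B)) := by
  rw [show (2 : Matrix (Fin d) (Fin d) ℂ) * M = (2:ℂ) • M by rw [two_smul, two_mul],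
    Matrix.smul_mul, Matrix.kronecker_smul]

lemma key {n d : ℕ} (L : Matrix (Fin n) (Fin n) ℂ) (M : Matrix (Fin d) (Fin d) ℂ) (m : ℕ) :
    (∑ j ∈ Finset.range (m + 2), (L ^ j) ⊗ₖ (Polynomial.aeval M (rescaledChebyshevT j))) *
      ((1 : Matrix (Fin n × Fin d) (Fin n × Fin d) ℂ) + (L ^ 2) ⊗ₖ 1 - (2 : ℂ) • (L ⊗ₖ M))
    = ((1 : ℂ)/2) • ((1 : Matrix (Fin n × Fin d) (Fin n × Fin d) ℂ) - (L ^ 2) ⊗ₖ 1)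
      + (L ^ (m + 3)) ⊗ₖ (Polynomial.aeval M (Polynomial.Chebyshev.T ℂ ((m : ℤ) + 1)))
      - (L ^ (m + 2)) ⊗ₖ (Polynomial.aeval M (Polynomial.Chebyshev.T ℂ ((m : ℤ) + 2))) := by
  have hg0 : Polynomial.aeval M (rescaledChebyshevT 0) =
      ((1 : ℂ)/2) • (1 : Matrix (Fin d) (Fin d) ℂ) := by
    rw [rescaledChebyshevT, if_pos rfl, Polynomial.aeval_C, Algebra.algebraMap_eq_smul_one]
  have hg : ∀ j : ℕ, Polynomial.aeval M (rescaledChebyshevT (j + 1)) =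
      Polynomial.aeval M (Polynomial.Chebyshev.T ℂ ((j : ℤ) + 1)) := by
    intro j
    rw [rescaledChebyshevT, if_neg (Nat.succ_ne_zero j)]
    norm_cast
  have h1 : Polynomial.aeval M (Polynomial.Chebyshev.T ℂ (0 + 1 : ℤ)) = M := by
    norm_num [Polynomial.Chebyshev.T_one]
  have h0 : Polynomial.aeval M (Polynomial.Chebyshev.T ℂ (0 : ℤ)) =
      (1 : Matrix (Fin d) (Fin d) ℂ) := by
    rw [Polynomial.Chebyshev.T_zero, map_one]
  induction m with
  | zero =>
    rw [Finset.sum_range_succ, Finset.sum_range_one, pow_zero, pow_one, hg0, hg 0]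
    simp only [Nat.cast_zero, zero_add]
    rw [show (1 : ℤ) = 0 + 1 by ring, show (2 : ℤ) = 0 + 2 by ring, u_rec M 0, h0, h1]
    rw [add_mul, mul_sub, mul_sub, mul_add, mul_add, Matrix.mul_one, Matrix.mul_one,
      ← Matrix.mul_kronecker_mul, ← Matrix.mul_kronecker_mul,
      Matrix.mul_smul, Matrix.mul_smul, ← Matrix.mul_kronecker_mul, ← Matrix.mul_kronecker_mul]
    rw [Matrix.one_mul, Matrix.mul_one, Matrix.one_mul, Matrix.mul_one,
      show L * L = L ^ 2 from (sq L).symm, kronecker_sub', smul_sub]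
    simp only [Matrix.smul_mul, Matrix.one_mul, Matrix.kronecker_smul, Matrix.smul_kronecker,
      Matrix.one_kronecker_one, kron_twoMul L M]
    rw [show L * L ^ 2 = L ^ 3 by rw [show (3:ℕ) = 1 + 2 by norm_num, pow_add, pow_one]]
    module
  | succ k ih =>
    rw [Finset.sum_range_succ, add_mul, ih, hg (k + 1)]
    push_cast
    rw [show k + 1 + 3 = k + 4 from by omega, show k + 1 + 2 = k + 3 from by omega]
    rw [show ((k:ℤ) + 1 + 1) = (k:ℤ) + 2 by ring, show ((k:ℤ) + 1 + 2) = (k:ℤ) + 3 by ring]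
    rw [show ((k:ℤ) + 3) = ((k:ℤ) + 1) + 2 by ring, u_rec M ((k:ℤ) + 1),
      show ((k:ℤ) + 1 + 1) = (k:ℤ) + 2 by ring]
    rw [mul_sub, mul_add, Matrix.mul_one, ← Matrix.mul_kronecker_mul, Matrix.mul_smul,
      ← Matrix.mul_kronecker_mul, aeval_commute M]
    rw [show L ^ (k + 2) * L ^ 2 = L ^ (k + 4) by rw [← pow_add], 
      show L ^ (k + 2) * L = L ^ (k + 3) by rw [← pow_succ]]
    rw [kronecker_sub', kron_twoMul L M, Matrix.mul_one]
    module


/-- Matrix Chebyshev generating function (first kind, rescaled): for the `n×n` lower shift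
matrix `L` and any square matrix `M`,
`Σ_{j=0}^{n-1} L^j ⊗ T̃_j(M) = (1/2)(I⊗I - L²⊗I)·(I⊗I + L²⊗I - 2L⊗M)⁻¹`. -/
theorem matrix_chebyshev_T_generating_function (n d : ℕ)
    (L : Matrix (Fin n) (Fin n) ℂ)
    (hL : ∀ a b : Fin n, L a b = if (a : ℕ) = (b : ℕ) + 1 then 1 else 0)
    (M : Matrix (Fin d) (Fin d) ℂ) :
    ∑ j ∈ Finset.range n, (L ^ j) ⊗ₖ (Polynomial.aeval M (rescaledChebyshevT j)) =
      ((1 : ℂ) / 2) • (((1 : Matrix (Fin n × Fin d) (Fin n × Fin d) ℂ)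
            - (L ^ 2) ⊗ₖ (1 : Matrix (Fin d) (Fin d) ℂ)) *
        ((1 : Matrix (Fin n × Fin d) (Fin n × Fin d) ℂ)
            + (L ^ 2) ⊗ₖ (1 : Matrix (Fin d) (Fin d) ℂ) - (2 : ℂ) • (L ⊗ₖ M))⁻¹) := by
  rcases Nat.eq_zero_or_pos n with rfl | hn
  · ext ⟨a, b⟩ c
    exact a.elim0
  rcases Nat.lt_or_ge n 2 with hn2 | hn2
  · -- n = 1
    have hn1 : n = 1 := by omega
    subst hn1
    have hL0 : L = 0 := by
      ext a b
      rw [hL, if_neg (by have := a.isLt; have := b.isLt; omega)]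
      rfl
    subst hL0
    simp [rescaledChebyshevT, Polynomial.aeval_C, Algebra.algebraMap_eq_smul_one,
      Matrix.zero_kronecker, Matrix.kronecker_smul, Matrix.one_kronecker_one,
      inv_one, zero_pow]
  · obtain ⟨m, rfl⟩ : ∃ m, n = m + 2 := ⟨n - 2, by omega⟩
    have hLn : L ^ (m + 2) = 0 := shift_pow_zero_of_le L hL le_rfl
    have hLn3 : L ^ (m + 3) = 0 := shift_pow_zero_of_le L hL (by omega)
    have hSA := key L M m
    rw [hLn, hLn3, Matrix.zero_kronecker, Matrix.zero_kronecker, add_zero, sub_zero] at hSA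
    set A : Matrix (Fin (m + 2) × Fin d) (Fin (m + 2) × Fin d) ℂ :=
      (1 : Matrix (Fin (m + 2) × Fin d) (Fin (m + 2) × Fin d) ℂ)
        + (L ^ 2) ⊗ₖ (1 : Matrix (Fin d) (Fin d) ℂ) - (2 : ℂ) • (L ⊗ₖ M) with hA
    have hU : IsUnit A := A_isUnit L hLn M
    have hdet : IsUnit A.det := (Matrix.isUnit_iff_isUnit_det A).mp hU
    have hinv : A * A⁻¹ = 1 := Matrix.mul_nonsing_inv A hdet
    calc ∑ j ∈ Finset.range (m + 2), (L ^ j) ⊗ₖ (Polynomial.aeval M (rescaledChebyshevT j))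
        = (∑ j ∈ Finset.range (m + 2), (L ^ j) ⊗ₖ (Polynomial.aeval M (rescaledChebyshevT j)))
            * (A * A⁻¹) := by rw [hinv, Matrix.mul_one]
      _ = ((∑ j ∈ Finset.range (m + 2), (L ^ j) ⊗ₖ (Polynomial.aeval M (rescaledChebyshevT j)))
            * A) * A⁻¹ := by rw [Matrix.mul_assoc]
      _ = (((1 : ℂ)/2) • ((1 : Matrix (Fin (m + 2) × Fin d) (Fin (m + 2) × Fin d) ℂ)
            - (L ^ 2) ⊗ₖ (1 : Matrix (Fin d) (Fin d) ℂ))) * A⁻¹ := by rw [hSA]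
      _ = ((1 : ℂ)/2) • (((1 : Matrix (Fin (m + 2) × Fin d) (Fin (m + 2) × Fin d) ℂ)
            - (L ^ 2) ⊗ₖ (1 : Matrix (Fin d) (Fin d) ℂ)) * A⁻¹) := by rw [Matrix.smul_mul]
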